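/- Fix p ∈ ℝ that is not a positive integer. For every x < 0, the hypergeometric series ₂F₁(1, 1−p; 2−p; −eˣ) = Σ_{n=0}^{∞} [(1)ₙ (1−p)ₙ / ((2−p)ₙ · n!)] (−eˣ)ⁿ converges, and the function G(x) = (e^{(1−p)x}/(1−p)) · ₂F₁(1, 1−p; 2−p; −eˣ) is differentiable on (−∞, 0) with derivative G′(x) = e^{(1−p)x}/(eˣ + 1), i.e., G is an antiderivative of the Laplace integrand S(x)e^{-px} of the Sigmoid function S(x) = eˣ/(eˣ+1). -/

import Mathlib

/-- The Pochhammer (ascending factorial) symbol `(a)ₙ = a(a+1)⋯(a+n-1)` in `ℝ`. -/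
noncomputable def pochhammerR (a : ℝ) (n : ℕ) : ℝ := (ascPochhammer ℝ n).eval a

/-- The `n`-th term of the Gauss hypergeometric series
`₂F₁(1, 1-p; 2-p; z) = Σₙ (1)ₙ(1-p)ₙ zⁿ / ((2-p)ₙ n!)`. -/
noncomputable def sigmoidLaplaceTerm (p : ℝ) (z : ℝ) (n : ℕ) : ℝ :=
  pochhammerR 1 n * pochhammerR (1 - p) n
    / (pochhammerR (2 - p) n * (Nat.factorial n)) * z ^ n

/-!
With `c = 1 - p`, the identities `(1)ₙ = n!` and `c · (c+1)ₙ = (c)ₙ · (c+n)` collapse the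
hypergeometric coefficients to `c / (n + c)`, so
`G(t) = Σₙ (-1)ⁿ e^{(n+c)t} / (n+c)`. On `t < 0` the termwise derivatives
`(-1)ⁿ e^{(n+c)t} = e^{ct} (-eᵗ)ⁿ` are locally dominated by a geometric series, so `G` can be
differentiated term by term, and the derivative is the geometric sum `e^{ct} / (1 + eᵗ)`.
-/

open Real Set Filter Asymptotics Nat

lemma pochhammerR_mul_add (c : ℝ) (n : ℕ) :
    c * pochhammerR (c + 1) n = pochhammerR c n * (c + n) := by
  simpa [pochhammerR, ascPochhammer_succ_eval, Polynomial.eval_comp] using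
    (congrArg (Polynomial.eval c) (ascPochhammer_succ_left ℝ n)).symm

lemma pochhammerR_ne_zero {a : ℝ} (ha : ∀ k : ℕ, (k : ℝ) + a ≠ 0) (n : ℕ) :
    pochhammerR a n ≠ 0 := by
  rw [pochhammerR, Ne, ascPochhammer_eval_eq_zero_iff]
  rintro ⟨k, -, hk⟩
  exact ha k (by rw [hk]; ring)

lemma pochhammerR_one_mul_div (c : ℝ) (hc : ∀ k : ℕ, (k : ℝ) + c ≠ 0) (n : ℕ) :
    pochhammerR 1 n * pochhammerR c n / (pochhammerR (c + 1) n * n !) = c / (n + c) := by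
  have hc1 : pochhammerR (c + 1) n ≠ 0 :=
    pochhammerR_ne_zero (fun k => by convert hc (k + 1) using 1; push_cast; ring) n
  have h1 : pochhammerR 1 n = n ! := ascPochhammer_eval_one ℝ n
  rw [h1, div_eq_div_iff (mul_ne_zero hc1 (by positivity)) (hc n)]
  linear_combination -(n ! : ℝ) * pochhammerR_mul_add c n

lemma summable_inv_add_mul_pow (c : ℝ) {z : ℝ} (hz : ‖z‖ < 1) :
    Summable fun n : ℕ => (n + c)⁻¹ * z ^ n := by
  refine summable_of_isBigO_nat (summable_geometric_of_lt_one (norm_nonneg z) hz) ?_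
  have hlim : Tendsto (fun n : ℕ => ((n : ℝ) + c)⁻¹) atTop (nhds 0) :=
    tendsto_inv_atTop_zero.comp
      (tendsto_atTop_add_const_right _ c tendsto_natCast_atTop_atTop)
  have hbdd := hlim.isBigO_one ℝ
  simpa using (hbdd.mul (isBigO_refl (fun n : ℕ => z ^ n) atTop)).norm_right

lemma sigmoidLaplaceTerm_eq {p : ℝ} (hc : ∀ n : ℕ, (n : ℝ) + (1 - p) ≠ 0) (z : ℝ) (n : ℕ) :
    sigmoidLaplaceTerm p z n = (1 - p) * ((n + (1 - p))⁻¹ * z ^ n) := by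
  rw [sigmoidLaplaceTerm, show (2 : ℝ) - p = 1 - p + 1 by ring, pochhammerR_one_mul_div _ hc]
  ring

lemma norm_neg_exp_lt_one {t : ℝ} (ht : t < 0) : ‖-exp t‖ < 1 := by
  simpa [abs_exp] using ht

lemma neg_one_pow_mul_exp_add_mul (n : ℕ) (c t : ℝ) :
    (-1) ^ n * exp ((n + c) * t) = exp (c * t) * (-exp t) ^ n := by
  rw [add_mul, exp_add, exp_nat_mul, neg_pow]
  ring

lemma hasDerivAt_neg_one_pow_mul_exp_div {n : ℕ} {c : ℝ} (hn : (n : ℝ) + c ≠ 0) (t : ℝ) :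
    HasDerivAt (fun s => (-1) ^ n * exp ((n + c) * s) / (n + c))
      ((-1) ^ n * exp ((n + c) * t)) t := by
  refine ((((hasDerivAt_id t).const_mul (n + c)).exp).const_mul ((-1 : ℝ) ^ n)).div_const
    (n + c) |>.congr_deriv ?_
  simp only [id, mul_one]
  field_simp

theorem hasDerivAt_tsum_neg_one_pow_mul_exp_div {c x : ℝ} (hc : ∀ n : ℕ, (n : ℝ) + c ≠ 0)
    (hx : x < 0) :
    HasDerivAt (fun t => ∑' n : ℕ, (-1) ^ n * exp ((n + c) * t) / (n + c))
      (exp (c * x) / (exp x + 1)) x := by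
  have hx_mem : x ∈ Ioo (2 * x) (x / 2) := ⟨by linarith, by linarith⟩
  have hbound : ∀ (n : ℕ), ∀ t ∈ Ioo (2 * x) (x / 2),
      ‖(-1) ^ n * exp ((n + c) * t)‖ ≤ exp (|c| * (-2 * x)) * exp (x / 2) ^ n := by
    rintro n t ⟨ht₁, ht₂⟩
    rw [neg_one_pow_mul_exp_add_mul, norm_mul, norm_pow, norm_neg, norm_of_nonneg (exp_pos _).le,
      norm_of_nonneg (exp_pos _).le]
    have hct : c * t ≤ |c| * (-2 * x) := calc
      c * t ≤ |c * t| := le_abs_self _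
      _ = |c| * -t := by rw [abs_mul, abs_of_neg (a := t) (by linarith)]
      _ ≤ |c| * (-2 * x) := by gcongr; linarith
    gcongr
  have hsummable : Summable fun n : ℕ => (-1) ^ n * exp ((n + c) * x) / (n + c) := by
    refine ((summable_inv_add_mul_pow c (norm_neg_exp_lt_one hx)).mul_left (exp (c * x))).congr
      fun n => ?_
    rw [div_eq_mul_inv, neg_one_pow_mul_exp_add_mul]
    ring
  have hsum_deriv : ∑' n : ℕ, (-1) ^ n * exp ((n + c) * x) = exp (c * x) / (exp x + 1) := by
    simp_rw [neg_one_pow_mul_exp_add_mul, tsum_mul_left,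
      tsum_geometric_of_norm_lt_one (norm_neg_exp_lt_one hx)]
    rw [sub_neg_eq_add, add_comm, div_eq_mul_inv]
  rw [← hsum_deriv]
  exact hasDerivAt_tsum_of_isPreconnected
    ((summable_geometric_of_lt_one (exp_pos _).le (exp_lt_one_iff.2 (by linarith))).mul_left _)
    isOpen_Ioo (convex_Ioo _ _).isPreconnected
    (fun n t _ => hasDerivAt_neg_one_pow_mul_exp_div (hc n) t) hbound hx_mem hsummable hx_mem

/-- **Laplace transform of the Sigmoid (paper Thm 4.2).** Fix `p ∈ ℝ` not a
positive integer. For `x < 0` the hypergeometric series `₂F₁(1, 1-p; 2-p; -eˣ)`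
converges, and `G(x) = (e^{(1-p)x}/(1-p)) · ₂F₁(1, 1-p; 2-p; -eˣ)` is
differentiable on `(-∞, 0)` with derivative `e^{(1-p)x}/(eˣ+1)`, the Laplace
integrand `S(x)e^{-px}` of the Sigmoid `S(x) = eˣ/(eˣ+1)`. -/
theorem sigmoid_laplace_antideriv (p : ℝ) (hp : ∀ n : ℕ, 0 < n → p ≠ (n : ℝ)) :
    ∀ x : ℝ, x < 0 →
      Summable (fun n => sigmoidLaplaceTerm p (-Real.exp x) n)
        ∧ HasDerivAt
            (fun t : ℝ =>
              Real.exp ((1 - p) * t) / (1 - p)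
                * ∑' n, sigmoidLaplaceTerm p (-Real.exp t) n)
            (Real.exp ((1 - p) * x) / (Real.exp x + 1)) x := by
  intro x hx
  have hc : ∀ n : ℕ, (n : ℝ) + (1 - p) ≠ 0 := fun n h =>
    hp (n + 1) n.succ_pos (by push_cast; linarith)
  refine ⟨?_, ?_⟩
  · simp_rw [sigmoidLaplaceTerm_eq hc]
    exact (summable_inv_add_mul_pow _ (norm_neg_exp_lt_one hx)).mul_left _
  · convert hasDerivAt_tsum_neg_one_pow_mul_exp_div hc hx using 1
    funext t
    simp_rw [sigmoidLaplaceTerm_eq hc, ← tsum_mul_left]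
    congr 1
    funext n
    rw [neg_one_pow_mul_exp_add_mul]
    field_simp [hc n, show 1 - p ≠ 0 by simpa using hc 0]
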